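/- arXiv:1712.07815 — 3 statements merged into one kernel-verified Lean document; each statement's English description precedes it below -/
import Mathlib

section
/- If a smooth complex-valued function u(x,t) solves the complex short pulse equation u_{xt} + u + ½(|u|²u_x)_x = 0, then the conservation law (√m)_t = -½(|u|²√m)_x holds, where m = 1 + |u_x|². -/
open Complex

/-- Derivative of `normSq ∘ f` for a real-variable complex function. -/
lemma hasDerivAt_normSq_comp {f : ℝ → ℂ} {f' : ℂ} {x : ℝ} (hf : HasDerivAt f f' x) :
    HasDerivAt (fun y => Complex.normSq (f y)) (2 * ((starRingEnd ℂ) (f x) * f').re) x := by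
  have hre : HasDerivAt (fun y => (f y).re) f'.re x :=
    Complex.reCLM.hasFDerivAt.comp_hasDerivAt x hf
  have him : HasDerivAt (fun y => (f y).im) f'.im x :=
    Complex.imCLM.hasFDerivAt.comp_hasDerivAt x hf
  have h := (hre.fun_mul hre).fun_add (him.fun_mul him)
  have heq : (fun y => Complex.normSq (f y)) = fun y => (f y).re * (f y).re + (f y).im * (f y).im := by
    funext y; simp [Complex.normSq_apply]
  rw [heq]
  convert h using 1
  · rfl
  · rfl
  simp [Complex.mul_re]
  ring

/-- If a smooth complex-valued `u(x,t)` solves the complex short pulse equation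
`u_{xt} + u + ½(|u|²u_x)_x = 0`, then the conservation law
`(√m)_t = -½(|u|²√m)_x` holds with `m = 1 + |u_x|²`. -/
theorem stmt_2 (u : ℝ → ℝ → ℂ)
    (hu : ContDiff ℝ (⊤ : ℕ∞) (fun p : ℝ × ℝ => u p.1 p.2))
    (hpde : ∀ x t : ℝ,
      deriv (fun t' => deriv (fun x' => u x' t') x) t + u x t +
        (1 / 2 : ℂ) * deriv
          (fun x' => ((‖u x' t‖ : ℂ) ^ 2) * deriv (fun x'' => u x'' t) x') x = 0) :
    ∀ x t : ℝ,
      deriv (fun t' => Real.sqrt (1 + ‖deriv (fun x' => u x' t') x‖ ^ 2)) t =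
        -(1 / 2) * deriv
          (fun x' => ‖u x' t‖ ^ 2 *
            Real.sqrt (1 + ‖deriv (fun x'' => u x'' t) x'‖ ^ 2)) x := by
  intro x t
  set F : ℝ × ℝ → ℂ := fun p => u p.1 p.2 with hFdef
  have hFd : Differentiable ℝ F := hu.differentiable (by simp)
  set V : ℝ × ℝ → ℂ := fun p => fderiv ℝ F p ((1:ℝ), (0:ℝ)) with hVdef
  have hV : ContDiff ℝ (⊤ : ℕ∞) V :=
    (ContinuousLinearMap.apply ℝ ℂ ((1:ℝ),(0:ℝ))).contDiff.comp (hu.fderiv_right (by simp))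
  have hVd : Differentiable ℝ V := hV.differentiable (by simp)
  -- partial x derivative of u is V
  have hux : ∀ a b : ℝ, HasDerivAt (fun x' => u x' b) (V (a, b)) a := by
    intro a b
    have h1 : HasDerivAt (fun x' : ℝ => (x', b)) ((1:ℝ), (0:ℝ)) a :=
      (hasDerivAt_id a).prodMk (hasDerivAt_const a b)
    exact (hFd (a, b)).hasFDerivAt.comp_hasDerivAt a h1
  have hderiv_x : ∀ a b : ℝ, deriv (fun x' => u x' b) a = V (a, b) := fun a b => (hux a b).deriv
  -- partial derivatives of V
  have hVx : HasDerivAt (fun x' => V (x', t)) (fderiv ℝ V (x, t) ((1:ℝ), (0:ℝ))) x := by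
    have h1 : HasDerivAt (fun x' : ℝ => (x', t)) ((1:ℝ), (0:ℝ)) x :=
      (hasDerivAt_id x).prodMk (hasDerivAt_const x t)
    exact (hVd (x, t)).hasFDerivAt.comp_hasDerivAt x h1
  have hVt : HasDerivAt (fun t' => V (x, t')) (fderiv ℝ V (x, t) ((0:ℝ), (1:ℝ))) t := by
    have h1 : HasDerivAt (fun t' : ℝ => (x, t')) ((0:ℝ), (1:ℝ)) t :=
      (hasDerivAt_const t x).prodMk (hasDerivAt_id t)
    exact (hVd (x, t)).hasFDerivAt.comp_hasDerivAt t h1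
  set v : ℂ := V (x, t) with hv
  set Vx : ℂ := fderiv ℝ V (x, t) ((1:ℝ), (0:ℝ)) with hVxdef
  set Vt : ℂ := fderiv ℝ V (x, t) ((0:ℝ), (1:ℝ)) with hVtdef
  set a : ℂ := u x t with ha
  set P : ℝ := 2 * ((starRingEnd ℂ) a * v).re with hP
  set A : ℝ := Complex.normSq a with hA
  set mx : ℝ := 2 * ((starRingEnd ℂ) v * Vx).re with hmx
  set mt : ℝ := 2 * ((starRingEnd ℂ) v * Vt).re with hmt
  have hm : (0:ℝ) < 1 + Complex.normSq v := by
    have := Complex.normSq_nonneg v; linarith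
  set s : ℝ := Real.sqrt (1 + Complex.normSq v) with hs
  have hspos : 0 < s := Real.sqrt_pos.mpr hm
  have hs2 : s * s = 1 + Complex.normSq v := Real.mul_self_sqrt hm.le
  -- PDE at (x,t): Vt = -a - (1/2)*(P*v + A*Vx)
  have hD : HasDerivAt (fun x' => ((‖u x' t‖ : ℂ) ^ 2) * deriv (fun x'' => u x'' t) x')
      ((P : ℂ) * v + (A : ℂ) * Vx) x := by
    have heq : (fun x' => ((‖u x' t‖ : ℂ) ^ 2) * deriv (fun x'' => u x'' t) x')
        = fun x' => ((Complex.normSq (u x' t) : ℝ) : ℂ) * V (x', t) := by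
      funext x'
      rw [hderiv_x]
      norm_cast
      rw [Complex.sq_norm]
    rw [heq]
    have h1 : HasDerivAt (fun x' => Complex.normSq (u x' t)) P x :=
      hasDerivAt_normSq_comp (hux x t)
    have h2 : HasDerivAt (fun x' => ((Complex.normSq (u x' t) : ℝ) : ℂ)) ((P : ℂ)) x :=
      Complex.ofRealCLM.hasFDerivAt.comp_hasDerivAt x h1
    exact h2.mul hVx
  have hpde' : Vt = -a - (1/2 : ℂ) * ((P : ℂ) * v + (A : ℂ) * Vx) := by
    have h0 := hpde x t
    have e1 : (fun t' => deriv (fun x' => u x' t') x) = fun t' => V (x, t') := by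
      funext t'; exact hderiv_x x t'
    rw [e1, hVt.deriv, hD.deriv] at h0
    linear_combination h0
  -- mt in terms of P, A, mx
  have hmt' : mt = -P - P * Complex.normSq v - (1/2) * A * mx := by
    rw [hmt, hpde', hmx, hP, hA, Complex.normSq_apply]
    simp [Complex.mul_re, Complex.mul_im, Complex.normSq_apply]
    ring
  -- LHS derivative
  have hLHS : HasDerivAt (fun t' => Real.sqrt (1 + ‖deriv (fun x' => u x' t') x‖ ^ 2))
      (mt / (2 * s)) t := by
    have heq : (fun t' => Real.sqrt (1 + ‖deriv (fun x' => u x' t') x‖ ^ 2))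
        = fun t' => Real.sqrt (1 + Complex.normSq (V (x, t'))) := by
      funext t'; rw [hderiv_x, Complex.sq_norm]
    rw [heq]
    have h1 : HasDerivAt (fun t' => 1 + Complex.normSq (V (x, t'))) mt t := by
      simpa only [zero_add] using (hasDerivAt_const t (1:ℝ)).fun_add (hasDerivAt_normSq_comp hVt)
    exact h1.sqrt (by simpa using hm.ne')
  -- RHS derivative
  have hRHS : HasDerivAt (fun x' => ‖u x' t‖ ^ 2 *
      Real.sqrt (1 + ‖deriv (fun x'' => u x'' t) x'‖ ^ 2))
      (P * s + A * (mx / (2 * s))) x := by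
    have heq : (fun x' => ‖u x' t‖ ^ 2 *
        Real.sqrt (1 + ‖deriv (fun x'' => u x'' t) x'‖ ^ 2))
        = fun x' => Complex.normSq (u x' t) * Real.sqrt (1 + Complex.normSq (V (x', t))) := by
      funext x'; rw [hderiv_x, Complex.sq_norm, Complex.sq_norm]
    rw [heq]
    have h1 : HasDerivAt (fun x' => Complex.normSq (u x' t)) P x :=
      hasDerivAt_normSq_comp (hux x t)
    have h2 : HasDerivAt (fun x' => 1 + Complex.normSq (V (x', t))) mx x := by
      simpa only [zero_add] using (hasDerivAt_const x (1:ℝ)).fun_add (hasDerivAt_normSq_comp hVx)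
    have h3 : HasDerivAt (fun x' => Real.sqrt (1 + Complex.normSq (V (x', t)))) (mx / (2 * s)) x :=
      h2.sqrt (by simpa using hm.ne')
    simpa using h1.fun_mul h3
  rw [hLHS.deriv, hRHS.deriv]
  rw [hmt']
  field_simp
  linear_combination (2*P) * hs2
end

section
/- Let a, b, y₀ ∈ ℝ with b ≠ 0, ψ₂(y,t) = b y − b t/(4(a²+b²)), and define x(y,t) = y − (b/(a²+b²))(tanh(2ψ₂ + 2y₀) − 1). Then ∂x/∂y = 1 − (2b²/(a²+b²)) sech²(2ψ₂ + 2y₀); consequently ∂x/∂y > 0 for all y if and only if a² > b², and ∂x/∂y → 1 as y → ±∞. -/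
open Real Filter

lemma tanh_hasDerivAt (x : ℝ) :
    HasDerivAt Real.tanh ((1 / Real.cosh x) ^ 2) x := by
  have h : HasDerivAt (fun y => Real.sinh y / Real.cosh y)
      ((Real.cosh x * Real.cosh x - Real.sinh x * Real.sinh x) / (Real.cosh x) ^ 2) x :=
    (Real.hasDerivAt_sinh x).div (Real.hasDerivAt_cosh x) (Real.cosh_pos x).ne'
  have e : (Real.cosh x * Real.cosh x - Real.sinh x * Real.sinh x) / (Real.cosh x) ^ 2
      = (1 / Real.cosh x) ^ 2 := by
    have := Real.cosh_sq_sub_sinh_sq x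
    field_simp
    nlinarith [this]
  rw [e] at h
  have : Real.tanh = fun y => Real.sinh y / Real.cosh y := by
    funext y; exact Real.tanh_eq_sinh_div_cosh y
  rw [this]
  exact h

lemma cosh_tendsto_atTop : Tendsto Real.cosh atTop atTop := by
  apply tendsto_atTop_mono (fun x => ?_) (Real.tendsto_exp_atTop.atTop_div_const two_pos)
  rw [Real.cosh_eq]
  have := (Real.exp_pos (-x)).le
  linarith

lemma cosh_tendsto_atBot : Tendsto Real.cosh atBot atTop := by
  have := cosh_tendsto_atTop.comp tendsto_neg_atBot_atTop
  have e : Real.cosh ∘ Neg.neg = Real.cosh := by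
    funext x; simp [Function.comp, Real.cosh_neg]
  rwa [e] at this

/-- For `x(y) = y − (b/(a²+b²))(tanh(2ψ₂+2y₀) − 1)` one has
`∂x/∂y = 1 − (2b²/(a²+b²)) sech²(2ψ₂+2y₀)`; it is everywhere positive iff
`a² > b²`, and it tends to `1` as `y → ±∞`. -/
theorem stmt_15 (a b y₀ t : ℝ) (hb : b ≠ 0)
    (X : ℝ → ℝ)
    (hX : ∀ y, X y = y - (b / (a ^ 2 + b ^ 2)) *
        (Real.tanh (2 * (b * y - b * t / (4 * (a ^ 2 + b ^ 2))) + 2 * y₀) - 1)) :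
    (∀ y, deriv X y = 1 - (2 * b ^ 2 / (a ^ 2 + b ^ 2)) *
        (1 / Real.cosh (2 * (b * y - b * t / (4 * (a ^ 2 + b ^ 2))) + 2 * y₀)) ^ 2) ∧
      ((∀ y, 0 < deriv X y) ↔ a ^ 2 > b ^ 2) ∧
      Filter.Tendsto (fun y => deriv X y) Filter.atTop (nhds 1) ∧
      Filter.Tendsto (fun y => deriv X y) Filter.atBot (nhds 1) := by
  set s : ℝ := a ^ 2 + b ^ 2 with hs
  have hspos : 0 < s := by positivity
  set u : ℝ → ℝ := fun y => 2 * (b * y - b * t / (4 * s)) + 2 * y₀ with hu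
  have hXe : X = fun y => y - (b / s) * (Real.tanh (u y) - 1) := funext hX
  have hud : ∀ y, HasDerivAt u (2 * b) y := by
    intro y
    have h1 : HasDerivAt (fun y : ℝ => 2 * (b * y - b * t / (4 * s)) + 2 * y₀) (2 * b) y := by
      have : HasDerivAt (fun y : ℝ => b * y) b y := by
        simpa using (hasDerivAt_id y).const_mul b
      simpa [mul_comm] using (((this.sub_const (b * t / (4 * s))).const_mul 2).add_const (2 * y₀))
    exact h1
  have hd : ∀ y, HasDerivAt X (1 - (2 * b ^ 2 / s) * (1 / Real.cosh (u y)) ^ 2) y := by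
    intro y
    have ht : HasDerivAt (fun y => Real.tanh (u y)) ((1 / Real.cosh (u y)) ^ 2 * (2 * b)) y :=
      (tanh_hasDerivAt (u y)).comp y (hud y)
    have := ((hasDerivAt_id y).sub
      (((ht.sub_const 1)).const_mul (b / s)))
    rw [hXe]
    exact this.congr_deriv (by ring)
  have hderiv : ∀ y, deriv X y = 1 - (2 * b ^ 2 / s) * (1 / Real.cosh (u y)) ^ 2 :=
    fun y => (hd y).deriv
  refine ⟨hderiv, ?_, ?_, ?_⟩
  · constructor
    · intro h
      have hy := h ((b * t / (4 * s) - y₀) / b)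
      rw [hderiv] at hy
      have hu0 : u ((b * t / (4 * s) - y₀) / b) = 0 := by
        simp only [hu]
        field_simp
        ring
      rw [hu0] at hy
      simp only [Real.cosh_zero] at hy
      have : 2 * b ^ 2 / s < 1 := by norm_num at hy; linarith
      rw [div_lt_one hspos] at this
      simp only [hs] at this
      nlinarith
    · intro h y
      rw [hderiv y]
      have h1 : 2 * b ^ 2 / s < 1 := by
        rw [div_lt_one hspos]; simp only [hs]; nlinarith
      have hc := Real.one_le_cosh (u y)
      have hcp := Real.cosh_pos (u y)
      have hq1 : (1 / Real.cosh (u y)) ^ 2 ≤ 1 := by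
        rw [div_pow, one_pow, div_le_one (by positivity)]
        nlinarith
      have hq0 : 0 < (1 / Real.cosh (u y)) ^ 2 := by positivity
      nlinarith [mul_le_mul_of_nonneg_left hq1 (by positivity : (0:ℝ) ≤ 2 * b ^ 2 / s)]
  · have hue : u = fun y => (2 * b) * y + (2 * y₀ - 2 * (b * t / (4 * s))) := by
      funext y; simp only [hu]; ring
    have hut : Tendsto u atTop atTop ∨ Tendsto u atTop atBot := by
      rw [hue]
      rcases hb.lt_or_gt with hbn | hbp
      · exact Or.inr (tendsto_atBot_add_const_right _ _
          (tendsto_id.const_mul_atTop_of_neg (by linarith : 2 * b < 0)))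
      · exact Or.inl (tendsto_atTop_add_const_right _ _
          (tendsto_id.const_mul_atTop (by linarith : 0 < 2 * b)))
    have hch : Tendsto (fun y => Real.cosh (u y)) atTop atTop := by
      rcases hut with h | h
      · exact cosh_tendsto_atTop.comp h
      · exact cosh_tendsto_atBot.comp h
    have h0 : Tendsto (fun y => (1 / Real.cosh (u y)) ^ 2) atTop (nhds 0) := by
      have := (tendsto_inv_atTop_zero.comp hch).pow 2
      simpa [Function.comp, one_div] using this
    have := (tendsto_const_nhds (x := (1:ℝ))).sub (h0.const_mul (2 * b ^ 2 / s))
    simp only [mul_zero, sub_zero] at this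
    refine this.congr fun y => ?_
    rw [hderiv y]
  · have hue : u = fun y => (2 * b) * y + (2 * y₀ - 2 * (b * t / (4 * s))) := by
      funext y; simp only [hu]; ring
    have hut : Tendsto u atBot atTop ∨ Tendsto u atBot atBot := by
      rw [hue]
      rcases hb.lt_or_gt with hbn | hbp
      · exact Or.inl (tendsto_atTop_add_const_right _ _
          (tendsto_id.const_mul_atBot_of_neg (by linarith : 2 * b < 0)))
      · exact Or.inr (tendsto_atBot_add_const_right _ _
          (tendsto_id.const_mul_atBot (by linarith : 0 < 2 * b)))
    have hch : Tendsto (fun y => Real.cosh (u y)) atBot atTop := by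
      rcases hut with h | h
      · exact cosh_tendsto_atTop.comp h
      · exact cosh_tendsto_atBot.comp h
    have h0 : Tendsto (fun y => (1 / Real.cosh (u y)) ^ 2) atBot (nhds 0) := by
      have := (tendsto_inv_atTop_zero.comp hch).pow 2
      simpa [Function.comp, one_div] using this
    have := (tendsto_const_nhds (x := (1:ℝ))).sub (h0.const_mul (2 * b ^ 2 / s))
    simp only [mul_zero, sub_zero] at this
    refine this.congr fun y => ?_
    rw [hderiv y]
end

section
/- In the one-soliton solution the amplitude envelope |u| = (b/(a²+b²)) sech(2ψ₂ + 2y₀) attains its maximum b/(a²+b²) at the point where 2ψ₂ + 2y₀ = 0, and this maximum, as a function of the wavenumber components, satisfies: the map y ↦ x(y,t) fails to be injective (loop soliton regime) exactly when |a| < |b|, has vanishing derivative at the peak (cuspon regime) exactly when |a| = |b|, and has everywhere positive derivative (smooth soliton) exactly when |a| > |b|. -/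
/-- The one-soliton amplitude `(b/(a²+b²)) sech(2ψ₂+2y₀)` attains its maximum
`b/(a²+b²)` where `2ψ₂+2y₀ = 0`, and the change of variables `y ↦ x(y,t)` is in
the loop regime iff `|a| < |b|`, the cuspon regime iff `|a| = |b|`, and the
smooth regime iff `|a| > |b|`. -/
theorem stmt_16 (a b y₀ t : ℝ) (hb : 0 < b)
    (ψ₂ : ℝ → ℝ) (hψ : ∀ y, ψ₂ y = b * y - b * t / (4 * (a ^ 2 + b ^ 2)))
    (D : ℝ → ℝ)
    (hD : ∀ y, D y = 1 - (2 * b ^ 2 / (a ^ 2 + b ^ 2)) *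
        (1 / Real.cosh (2 * ψ₂ y + 2 * y₀)) ^ 2) :
    (∀ y, (b / (a ^ 2 + b ^ 2)) * (1 / Real.cosh (2 * ψ₂ y + 2 * y₀)) ≤ b / (a ^ 2 + b ^ 2)) ∧
      (∀ y, 2 * ψ₂ y + 2 * y₀ = 0 →
        (b / (a ^ 2 + b ^ 2)) * (1 / Real.cosh (2 * ψ₂ y + 2 * y₀)) = b / (a ^ 2 + b ^ 2)) ∧
      ((∃ y, D y < 0) ↔ |a| < |b|) ∧
      ((∀ y, (D y = 0 ↔ 2 * ψ₂ y + 2 * y₀ = 0)) ↔ |a| = |b|) ∧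
      ((∀ y, 0 < D y) ↔ |a| > |b|) := by
  have hs : 0 < a ^ 2 + b ^ 2 := by positivity
  have hbne : b ≠ 0 := ne_of_gt hb
  -- the point where the phase vanishes
  set y₁ : ℝ := t / (4 * (a ^ 2 + b ^ 2)) + y₀ / b * (-1) with hy₁def
  have hθ₁ : 2 * ψ₂ y₁ + 2 * y₀ = 0 := by
    rw [hψ, hy₁def]; field_simp; ring
  have hD₁ : D y₁ = (a ^ 2 - b ^ 2) / (a ^ 2 + b ^ 2) := by
    rw [hD, hθ₁, Real.cosh_zero]
    field_simp
    ring
  have habslt : |a| < |b| ↔ a ^ 2 < b ^ 2 := by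
    rw [← sq_abs a, ← sq_abs b]
    constructor
    · intro h; exact pow_lt_pow_left₀ h (abs_nonneg a) two_ne_zero
    · intro h; nlinarith [abs_nonneg a, abs_nonneg b]
  have habsgt : |b| < |a| ↔ b ^ 2 < a ^ 2 := by
    rw [← sq_abs a, ← sq_abs b]
    constructor
    · intro h; exact pow_lt_pow_left₀ h (abs_nonneg b) two_ne_zero
    · intro h; nlinarith [abs_nonneg a, abs_nonneg b]
  have habseq : |a| = |b| ↔ a ^ 2 = b ^ 2 := by
    rw [← sq_abs a, ← sq_abs b]
    constructor
    · intro h; rw [h]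
    · intro h; nlinarith [abs_nonneg a, abs_nonneg b]
  refine ⟨?_, ?_, ?_, ?_, ?_⟩
  · intro y
    have hc := Real.one_le_cosh (2 * ψ₂ y + 2 * y₀)
    have hcp := Real.cosh_pos (2 * ψ₂ y + 2 * y₀)
    have h1 : 1 / Real.cosh (2 * ψ₂ y + 2 * y₀) ≤ 1 := (div_le_one hcp).mpr hc
    have hbs : 0 ≤ b / (a ^ 2 + b ^ 2) := by positivity
    calc b / (a ^ 2 + b ^ 2) * (1 / Real.cosh (2 * ψ₂ y + 2 * y₀))
        ≤ b / (a ^ 2 + b ^ 2) * 1 := by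
          exact mul_le_mul_of_nonneg_left h1 hbs
      _ = b / (a ^ 2 + b ^ 2) := mul_one _
  · intro y hy
    rw [hy, Real.cosh_zero]; simp
  · constructor
    · rintro ⟨y, hy⟩
      rw [hD] at hy
      have hc := Real.one_le_cosh (2 * ψ₂ y + 2 * y₀)
      have h1 : (1 / Real.cosh (2 * ψ₂ y + 2 * y₀)) ^ 2 ≤ 1 := by
        have hcp := Real.cosh_pos (2 * ψ₂ y + 2 * y₀)
        have h4 := (div_le_one hcp).mpr hc
        have h5 : (0:ℝ) ≤ 1 / Real.cosh (2 * ψ₂ y + 2 * y₀) := by positivity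
        nlinarith
      rw [habslt]
      have h2 : 0 ≤ 2 * b ^ 2 / (a ^ 2 + b ^ 2) := by positivity
      have h3 : (1:ℝ) < 2 * b ^ 2 / (a ^ 2 + b ^ 2) := by nlinarith
      have h6 := (lt_div_iff₀ hs).mp h3
      nlinarith
    · intro h
      refine ⟨y₁, ?_⟩
      rw [hD₁]
      have : a ^ 2 < b ^ 2 := habslt.mp h
      exact div_neg_of_neg_of_pos (by linarith) hs
  · constructor
    · intro h
      have h1 : D y₁ = 0 := (h y₁).mpr hθ₁
      rw [hD₁] at h1
      rw [habseq]
      have := (div_eq_zero_iff.mp h1).resolve_right (ne_of_gt hs)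
      linarith
    · intro h y
      have hab : a ^ 2 = b ^ 2 := habseq.mp h
      have hcoef : 2 * b ^ 2 / (a ^ 2 + b ^ 2) = 1 := by
        rw [hab]; field_simp; ring
      have hcp := Real.cosh_pos (2 * ψ₂ y + 2 * y₀)
      rw [hD, hcoef, one_mul]
      constructor
      · intro h0
        have hc2 : Real.cosh (2 * ψ₂ y + 2 * y₀) ^ 2 = 1 := by
          field_simp at h0
          have e : 2 * (ψ₂ y + y₀) = 2 * ψ₂ y + 2 * y₀ := by ring
          rw [e] at h0
          nlinarith
        have hc1 : Real.sinh (2 * ψ₂ y + 2 * y₀) = 0 := by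
          nlinarith [Real.cosh_sq (2 * ψ₂ y + 2 * y₀), sq_nonneg (Real.sinh (2 * ψ₂ y + 2 * y₀))]
        exact Real.sinh_eq_zero.mp hc1
      · intro h0
        rw [h0, Real.cosh_zero]; norm_num
  · constructor
    · intro h
      have h1 := h y₁
      rw [hD₁] at h1
      rw [gt_iff_lt, habsgt]
      have h2 := (lt_div_iff₀ hs).mp h1
      nlinarith
    · intro h y
      have hab : b ^ 2 < a ^ 2 := habsgt.mp h
      rw [hD]
      have hc := Real.one_le_cosh (2 * ψ₂ y + 2 * y₀)
      have hcp := Real.cosh_pos (2 * ψ₂ y + 2 * y₀)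
      have h1 : (1 / Real.cosh (2 * ψ₂ y + 2 * y₀)) ^ 2 ≤ 1 := by
        have h4 := (div_le_one hcp).mpr hc
        have h5 : (0:ℝ) ≤ 1 / Real.cosh (2 * ψ₂ y + 2 * y₀) := by positivity
        nlinarith
      have h2 : 2 * b ^ 2 / (a ^ 2 + b ^ 2) < 1 := by
        rw [div_lt_one hs]; linarith
      have h3 : 0 ≤ 2 * b ^ 2 / (a ^ 2 + b ^ 2) := by positivity
      nlinarith
end
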